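/- arXiv:math/0305404 — 2 statements merged into one kernel-verified Lean document; each statement's English description precedes it below -/
import Mathlib

section
/- For any positive integer b > 1 and integer a coprime to b, the sum ∑_{k=1}^{b-1} cot(πka/b) cot(πk/b) is a rational number (equivalently, 4b·s(a,b) ∈ ℚ). -/
open Real Finset

-- telescoping identity
lemma telesc (z : ℂ) (n : ℕ) :
    (z - 1) * ∑ j ∈ Finset.range n, (j : ℂ) * z ^ j
      = ((n : ℂ) - 1) * z ^ n + 1 - ∑ j ∈ Finset.range n, z ^ j := by
  induction n with
  | zero => simp
  | succ n ih =>
    rw [Finset.sum_range_succ, Finset.sum_range_succ (f := fun j => z ^ j), mul_add]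
    rw [ih]
    push_cast
    ring

lemma inv_formula (b : ℕ) (hb : 0 < b) (z : ℂ) (hz1 : z ≠ 1) (hzb : z ^ b = 1) :
    (z - 1)⁻¹ = (b : ℂ)⁻¹ * ∑ j ∈ Finset.range b, (j : ℂ) * z ^ j := by
  have hz0 : z - 1 ≠ 0 := sub_ne_zero.mpr hz1
  have hgeom : ∑ j ∈ Finset.range b, z ^ j = 0 := by
    have h := geom_sum_mul z b
    rw [hzb, sub_self] at h
    exact (mul_eq_zero.mp h).resolve_right hz0
  have key : (z - 1) * ∑ j ∈ Finset.range b, (j : ℂ) * z ^ j = b := by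
    rw [telesc, hzb, hgeom]; ring
  have hbne : (b : ℂ) ≠ 0 := Nat.cast_ne_zero.mpr hb.ne'
  field_simp
  linear_combination -key

lemma cot_formula (b m : ℕ) (hb : 0 < b) (hm : ¬ b ∣ m) :
    (Real.cot (π * m / b) : ℂ)
      = Complex.I * (Complex.exp (2 * π * Complex.I / b) ^ m + 1)
        / (Complex.exp (2 * π * Complex.I / b) ^ m - 1) := by
  have hprim : IsPrimitiveRoot (Complex.exp (2 * π * Complex.I / b)) b :=
    Complex.isPrimitiveRoot_exp b hb.ne'
  have hne1 : Complex.exp (2 * π * Complex.I / b) ^ m ≠ 1 := by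
    intro h; exact hm ((hprim.pow_eq_one_iff_dvd m).mp h)
  set u : ℂ := Complex.exp (π * Complex.I * m / b) with hu
  have hu0 : u ≠ 0 := Complex.exp_ne_zero _
  have hu2 : u ^ 2 = Complex.exp (2 * π * Complex.I / b) ^ m := by
    rw [hu, ← Complex.exp_nat_mul, ← Complex.exp_nat_mul]
    · norm_num
      ring_nf
  have h21 : u ^ 2 - 1 ≠ 0 := by rw [hu2]; exact sub_ne_zero.mpr hne1
  have harg : ((π * m / b : ℝ) : ℂ) * Complex.I = π * Complex.I * m / b := by
    push_cast; ring
  have harg' : -((π * m / b : ℝ) : ℂ) * Complex.I = -(π * Complex.I * m / b) := by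
    push_cast; ring
  rw [Complex.ofReal_cot, Complex.cot_eq_cos_div_sin, Complex.cos, Complex.sin,
    harg, harg', Complex.exp_neg, ← hu, ← hu2]
  have hs : (u⁻¹ - u) * Complex.I / 2 ≠ 0 := by
    intro h
    apply h21
    have h1 : u⁻¹ - u = 0 := by
      simpa [Complex.I_ne_zero] using h
    have h2 : u⁻¹ = u := sub_eq_zero.mp h1
    have h3 : u * u⁻¹ = 1 := mul_inv_cancel₀ hu0
    rw [h2] at h3
    rw [← h3]; ring
  rw [div_eq_div_iff hs h21]
  field_simp
  ring_nf
  simp [Complex.I_sq]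
  ring_nf

lemma pow_sum (b : ℕ) (hb : 1 < b) (m : ℕ) :
    ∑ k ∈ Finset.Icc 1 (b-1), Complex.exp (2*π*Complex.I/b) ^ (k*m)
      = if b ∣ m then (b:ℂ) - 1 else -1 := by
  have hb0 : 0 < b := by omega
  set ζ : ℂ := Complex.exp (2*π*Complex.I/b) with hζ
  have hprim : IsPrimitiveRoot ζ b := Complex.isPrimitiveRoot_exp b hb0.ne'
  have hIcc : Finset.Icc 1 (b-1) = Finset.Ico 1 b := by
    rw [← Finset.Ico_add_one_right_eq_Icc]; congr 1; omega
  have hrange : ∑ k ∈ Finset.range b, (ζ^m)^k = (if b ∣ m then (b:ℂ) else 0) := by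
    by_cases hd : b ∣ m
    · rw [if_pos hd]
      have h1 : ζ^m = 1 := (hprim.pow_eq_one_iff_dvd m).mpr hd
      simp [h1]
    · rw [if_neg hd]
      have hne : ζ^m ≠ 1 := fun h => hd ((hprim.pow_eq_one_iff_dvd m).mp h)
      have hmb : (ζ^m)^b = 1 := by
        rw [← pow_mul, mul_comm m b, pow_mul, hprim.pow_eq_one, one_pow]
      have h := geom_sum_mul (ζ^m) b
      rw [hmb, sub_self] at h
      exact (mul_eq_zero.mp h).resolve_right (sub_ne_zero.mpr hne)
  have hsplit : ∑ k ∈ Finset.range b, (ζ^m)^k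
      = 1 + ∑ k ∈ Finset.Ico 1 b, (ζ^m)^k := by
    rw [Finset.range_eq_Ico, Finset.sum_eq_sum_Ico_succ_bot hb0]
    simp
  have : ∑ k ∈ Finset.Ico 1 b, (ζ^m)^k = (if b ∣ m then (b:ℂ) else 0) - 1 := by
    rw [← hrange, hsplit]; ring
  rw [hIcc]
  calc ∑ k ∈ Finset.Ico 1 b, ζ ^ (k*m) = ∑ k ∈ Finset.Ico 1 b, (ζ^m)^k := by
        apply Finset.sum_congr rfl; intro k _; rw [← pow_mul, mul_comm]
    _ = (if b ∣ m then (b:ℂ) else 0) - 1 := this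
    _ = if b ∣ m then (b:ℂ) - 1 else -1 := by split_ifs <;> ring

theorem dedekind_cot_sum_rational (a b : ℕ) (ha : 0 < a) (hb : 1 < b)
    (hab : Nat.Coprime a b) :
    ∃ q : ℚ, ∑ k ∈ Finset.Icc 1 (b - 1),
      Real.cot (π * k * a / b) * Real.cot (π * k / b) = (q : ℝ) := by
  have hb0 : 0 < b := by omega
  set ζ : ℂ := Complex.exp (2 * π * Complex.I / b) with hζ
  have hprim : IsPrimitiveRoot ζ b := Complex.isPrimitiveRoot_exp b hb0.ne'
  set T : ℕ → ℚ := fun m => if b ∣ m then (b:ℚ) - 1 else -1 with hT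
  have hTC : ∀ m : ℕ, ∑ k ∈ Finset.Icc 1 (b-1), ζ ^ (k*m) = ((T m : ℚ) : ℂ) := by
    intro m
    rw [pow_sum b hb m]
    by_cases h : b ∣ m <;> simp [hT, h]
  refine ⟨-((b:ℚ)⁻¹*(b:ℚ)⁻¹) * ∑ i ∈ Finset.range b, ∑ j ∈ Finset.range b,
      (i:ℚ)*(j:ℚ)*(T (a*i+j+a+1) + T (a*i+j+a) + T (a*i+j+1) + T (a*i+j)), ?_⟩
  rw [← Complex.ofReal_inj]
  simp only [Complex.ofReal_sum, Complex.ofReal_mul]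
  have step1 : ∀ k ∈ Finset.Icc 1 (b-1),
      (Real.cot (π*k*a/b) : ℂ) * (Real.cot (π*k/b) : ℂ)
        = -((b:ℂ)⁻¹*(b:ℂ)⁻¹) * ∑ i ∈ Finset.range b, ∑ j ∈ Finset.range b,
            (i:ℂ)*(j:ℂ)*(ζ^(k*(a*i+j+a+1)) + ζ^(k*(a*i+j+a)) + ζ^(k*(a*i+j+1)) + ζ^(k*(a*i+j))) := by
    intro k hk
    rw [Finset.mem_Icc] at hk
    have hkb : k < b := by omega
    have hndk : ¬ b ∣ k := by
      intro h; have := Nat.le_of_dvd (by omega) h; omega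
    have hndka : ¬ b ∣ k * a := by
      intro h
      exact hndk ((Nat.Coprime.dvd_of_dvd_mul_right (hab.symm)) h)
    have harg : π * (k:ℝ) * a / b = π * ((k*a : ℕ) : ℝ) / b := by push_cast; ring
    rw [harg, cot_formula b (k*a) hb0 hndka, cot_formula b k hb0 hndk, ← hζ]
    have hz1 : ζ^k ≠ 1 := fun h => hndk ((hprim.pow_eq_one_iff_dvd k).mp h)
    have hw1 : ζ^(k*a) ≠ 1 := fun h => hndka ((hprim.pow_eq_one_iff_dvd (k*a)).mp h)
    have hzb : (ζ^k)^b = 1 := by rw [← pow_mul, mul_comm k b, pow_mul, hprim.pow_eq_one, one_pow]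
    have hwb : (ζ^(k*a))^b = 1 := by
      rw [← pow_mul, mul_comm (k*a) b, pow_mul, hprim.pow_eq_one, one_pow]
    rw [div_mul_div_comm, div_eq_mul_inv, mul_inv,
      inv_formula b hb0 _ hw1 hwb, inv_formula b hb0 _ hz1 hzb]
    set Sw : ℂ := ∑ i ∈ Finset.range b, (i:ℂ) * (ζ^(k*a))^i with hSw
    set Sz : ℂ := ∑ j ∈ Finset.range b, (j:ℂ) * (ζ^k)^j with hSz
    have hSwSz : Sw * Sz = ∑ i ∈ Finset.range b, ∑ j ∈ Finset.range b,
        ((i:ℂ) * (ζ^(k*a))^i) * ((j:ℂ) * (ζ^k)^j) := Finset.sum_mul_sum _ _ _ _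
    have hsum4 : (ζ^(k*a)+1) * (ζ^k+1) * (Sw * Sz)
        = ∑ i ∈ Finset.range b, ∑ j ∈ Finset.range b,
            (i:ℂ)*(j:ℂ)*(ζ^(k*(a*i+j+a+1)) + ζ^(k*(a*i+j+a)) + ζ^(k*(a*i+j+1)) + ζ^(k*(a*i+j))) := by
      rw [hSwSz, Finset.mul_sum]
      apply Finset.sum_congr rfl; intro i _
      rw [Finset.mul_sum]
      apply Finset.sum_congr rfl; intro j _
      simp only [← pow_mul]
      rw [show k*(a*i+j+a+1) = k*a*i + (k*j + (k*a + k)) from by ring,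
          show k*(a*i+j+a) = k*a*i + (k*j + k*a) from by ring,
          show k*(a*i+j+1) = k*a*i + (k*j + k) from by ring,
          show k*(a*i+j) = k*a*i + k*j from by ring]
      simp only [pow_add]
      ring
    rw [← hsum4]
    linear_combination ((ζ^(k*a)+1)*(ζ^k+1)*Sw*Sz*(b:ℂ)⁻¹*(b:ℂ)⁻¹) * Complex.I_sq
  rw [Finset.sum_congr rfl step1, ← Finset.mul_sum]
  rw [Finset.sum_comm]
  have inner : ∀ i ∈ Finset.range b,
      ∑ k ∈ Finset.Icc 1 (b-1), ∑ j ∈ Finset.range b,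
        (i:ℂ)*(j:ℂ)*(ζ^(k*(a*i+j+a+1)) + ζ^(k*(a*i+j+a)) + ζ^(k*(a*i+j+1)) + ζ^(k*(a*i+j)))
      = ∑ j ∈ Finset.range b, (i:ℂ)*(j:ℂ)*(((T (a*i+j+a+1) : ℚ) : ℂ) + ((T (a*i+j+a) : ℚ) : ℂ)
          + ((T (a*i+j+1) : ℚ) : ℂ) + ((T (a*i+j) : ℚ) : ℂ)) := by
    intro i _
    rw [Finset.sum_comm]
    apply Finset.sum_congr rfl; intro j _
    rw [← hTC, ← hTC, ← hTC, ← hTC]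
    rw [← Finset.sum_add_distrib, ← Finset.sum_add_distrib, ← Finset.sum_add_distrib,
      Finset.mul_sum]
  rw [Finset.sum_congr rfl inner]
  push_cast
  ring
end

section
/- For coprime positive integers a and b, 12ab·(s(a,b) + s(b,a)) = -3ab + a² + 1 + b², hence 12ab·s(a,b) + 12ab·s(b,a) ∈ ℤ. -/
open Real Finset

set_option maxHeartbeats 1000000

namespace DedekindAux



def M (a b : ℕ) : ℕ := ∑ m ∈ Finset.Ico 1 b, m * (a*m % b)
def D (a b : ℕ) : ℕ := ∑ m ∈ Finset.Ico 1 b, m * (a*m / b)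
def E (a b : ℕ) : ℕ := ∑ m ∈ Finset.Ico 1 b, (a*m / b)^2
def F (a b : ℕ) : ℕ := ∑ m ∈ Finset.Ico 1 b, (a*m / b)
def S2 (b : ℕ) : ℕ := ∑ m ∈ Finset.Ico 1 b, m^2

lemma not_dvd (a b : ℕ) (hab : Nat.Coprime a b) {m : ℕ} (hm : m ∈ Finset.Ico 1 b) :
    ¬ b ∣ a * m := by
  rw [Finset.mem_Ico] at hm
  intro h
  have hbm : b ∣ m := Nat.Coprime.dvd_of_dvd_mul_left (Nat.coprime_comm.mp hab) h
  have := Nat.le_of_dvd (by omega) hbm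
  omega

lemma hS2 (b : ℕ) : 6 * S2 b = (b-1) * b * (2*b-1) := by
  induction b with
  | zero => simp [S2]
  | succ n ih =>
    rcases Nat.eq_zero_or_pos n with h | h
    · subst h; simp [S2]
    unfold S2 at ih ⊢
    obtain ⟨k, rfl⟩ : ∃ k, n = k + 1 := ⟨n-1, by omega⟩
    rw [Finset.sum_Ico_succ_top (by omega), Nat.mul_add, ih]
    have e1 : k+1-1 = k := by omega
    have e2 : k+1+1-1 = k+1 := by omega
    have e3 : 2*(k+1+1)-1 = 2*k+3 := by omega
    have e4 : 2*(k+1)-1 = 2*k+1 := by omega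
    rw [e1, e2, e3, e4]
    ring

lemma sum_Ico_id (b : ℕ) : 2 * (∑ m ∈ Finset.Ico 1 b, m) = b * (b-1) := by
  induction b with
  | zero => simp
  | succ n ih =>
    rcases Nat.eq_zero_or_pos n with h | h
    · subst h; simp
    obtain ⟨k, rfl⟩ : ∃ k, n = k + 1 := ⟨n-1, by omega⟩
    rw [Finset.sum_Ico_succ_top (by omega), Nat.mul_add, ih]
    have e1 : k+1-1 = k := by omega
    have e2 : k+1+1-1 = k+1 := by omega
    rw [e1, e2]
    ring

lemma mod_mem (a b : ℕ) (hab : Nat.Coprime a b) (hb : 0 < b) {m : ℕ}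
    (hm : m ∈ Finset.Ico 1 b) : a * m % b ∈ Finset.Ico 1 b := by
  have hnd := not_dvd a b hab hm
  have hlt := Nat.mod_lt (a*m) hb
  rw [Finset.mem_Ico]
  rcases Nat.eq_zero_or_pos (a*m % b) with h | h
  · exact absurd (Nat.dvd_iff_mod_eq_zero.mpr h) hnd
  · omega

-- (perm): sum of squares of residues
lemma perm_sq (a b : ℕ) (hab : Nat.Coprime a b) :
    ∑ m ∈ Finset.Ico 1 b, (a*m % b)^2 = S2 b := by
  rcases Nat.eq_zero_or_pos b with hb | hb
  · subst hb; simp [S2]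
  unfold S2
  set a' := a ^ (b.totient - 1) with ha'
  have h1 : a * a' ≡ 1 [MOD b] := by
    have ht := Nat.ModEq.pow_totient hab
    have hb1 : b.totient ≥ 1 := Nat.totient_pos.mpr hb
    calc a * a' = a ^ b.totient := by rw [ha', ← pow_succ']; congr 1; omega
    _ ≡ 1 [MOD b] := ht
  have hab' : Nat.Coprime a' b := Nat.Coprime.pow_left _ hab
  apply Finset.sum_nbij' (fun m => a*m % b) (fun m => a'*m % b)
  · intro m hm; exact mod_mem a b hab hb hm
  · intro m hm; exact mod_mem a' b hab' hb hm
  · intro m hm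
    rw [Finset.mem_Ico] at hm
    have e1 : a' * (a * m % b) % b = a' * (a*m) % b := by
      rw [Nat.mul_mod, Nat.mod_mod_of_dvd _ (dvd_refl b), ← Nat.mul_mod]
    simp only [e1]
    have e2 : a' * (a*m) = (a*a') * m := by ring
    rw [e2]
    calc (a*a')*m % b = 1 * m % b := Nat.ModEq.mul_right m h1
    _ = m := by rw [one_mul]; exact Nat.mod_eq_of_lt hm.2
  · intro m hm
    rw [Finset.mem_Ico] at hm
    have e1 : a * (a' * m % b) % b = a * (a'*m) % b := by
      rw [Nat.mul_mod, Nat.mod_mod_of_dvd _ (dvd_refl b), ← Nat.mul_mod]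
    simp only [e1]
    have e2 : a * (a'*m) = (a*a') * m := by ring
    rw [e2]
    calc (a*a')*m % b = 1 * m % b := Nat.ModEq.mul_right m h1
    _ = m := by rw [one_mul]; exact Nat.mod_eq_of_lt hm.2
  · intro m hm; rfl




-- the filter description
lemma filt (a b : ℕ) (hab : Nat.Coprime a b) (ha : 0 < a) (hb : 0 < b) {n : ℕ}
    (hn : n ∈ Finset.Ico 1 a) :
    (Finset.Ico 1 b).filter (fun m => a*m < b*n) = Finset.Ico 1 (b*n/a + 1) := by
  have hnd : ¬ a ∣ b * n := not_dvd b a hab.symm hn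
  rw [Finset.mem_Ico] at hn
  have hqb : b*n/a < b := by
    rw [Nat.div_lt_iff_lt_mul ha]
    nlinarith [hn.2]
  ext m
  simp only [Finset.mem_filter, Finset.mem_Ico]
  constructor
  · rintro ⟨⟨h1, h2⟩, h3⟩
    refine ⟨h1, ?_⟩
    have : m ≤ b*n/a := by
      rw [Nat.le_div_iff_mul_le ha, Nat.mul_comm]
      omega
    omega
  · rintro ⟨h1, h2⟩
    have hm : m ≤ b*n/a := by omega
    have h4 : m * a ≤ b * n := (Nat.le_div_iff_mul_le ha).mp hm
    have h5 : a*m ≠ b*n := by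
      intro h
      exact hnd ⟨m, h.symm ▸ by ring⟩
    have hc : a*m = m*a := Nat.mul_comm a m
    exact ⟨⟨h1, by omega⟩, by omega⟩

lemma card_filt (a b : ℕ) (hab : Nat.Coprime a b) (ha : 0 < a) (hb : 0 < b) {n : ℕ}
    (hn : n ∈ Finset.Ico 1 a) :
    ((Finset.Ico 1 b).filter (fun m => a*m < b*n)).card = b*n/a := by
  rw [filt a b hab ha hb hn]
  simp [Nat.card_Ico]


-- pointwise ingredient for (A)
lemma div_add_div (a b : ℕ) (hab : Nat.Coprime a b) (ha : 0 < a) (hb : 0 < b) {m : ℕ}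
    (hm : m ∈ Finset.Ico 1 b) : a*m/b + a*(b-m)/b = a - 1 := by
  have hnd : ¬ b ∣ a*m := not_dvd a b hab hm
  rw [Finset.mem_Ico] at hm
  set q := a*m/b with hq
  set r := a*m % b with hr
  have hdm : b*q + r = a*m := Nat.div_add_mod (a*m) b
  have hr1 : 1 ≤ r := by
    rcases Nat.eq_zero_or_pos r with h | h
    · exact absurd (Nat.dvd_iff_mod_eq_zero.mpr h) hnd
    · exact h
  have hrb : r < b := Nat.mod_lt _ hb
  have hqa : q < a := by
    rw [hq, Nat.div_lt_iff_lt_mul hb]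
    nlinarith [hm.2]
  have key : a*(b-m) = b*(a - q - 1) + (b - r) := by
    have h1 : (a:ℤ)*m = b*q + r := by exact_mod_cast hdm.symm
    zify [show m ≤ b by omega, show q ≤ a by omega, show r ≤ b by omega,
      show (1:ℕ) ≤ a - q by omega]
    linear_combination -h1
  rw [key, Nat.mul_add_div hb, Nat.div_eq_of_lt (by omega)]
  omega

lemma lemA (a b : ℕ) (hab : Nat.Coprime a b) (ha : 0 < a) (hb : 0 < b) :
    2 * F a b = (a-1)*(b-1) := by
  have hrefl : F a b = ∑ m ∈ Finset.Ico 1 b, a*(b-m)/b := by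
    unfold F
    apply Finset.sum_nbij' (fun m => b - m) (fun m => b - m)
    · intro m hm; rw [Finset.mem_Ico] at hm ⊢; omega
    · intro m hm; rw [Finset.mem_Ico] at hm ⊢; omega
    · intro m hm; rw [Finset.mem_Ico] at hm; omega
    · intro m hm; rw [Finset.mem_Ico] at hm; omega
    · intro m hm; rw [Finset.mem_Ico] at hm
      congr 2
      omega
  have : 2 * F a b = ∑ m ∈ Finset.Ico 1 b, (a*m/b + a*(b-m)/b) := by
    rw [Finset.sum_add_distrib, ← hrefl]
    unfold F; ring
  rw [this, Finset.sum_congr rfl (fun m hm => div_add_div a b hab ha hb hm)]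
  rw [Finset.sum_const, Nat.card_Ico]
  simp [Nat.mul_comm]

-- double sum representations
lemma hDrep (a b : ℕ) (hab : Nat.Coprime a b) (ha : 0 < a) (hb : 0 < b) :
    D b a = ∑ n ∈ Finset.Ico 1 a, ∑ m ∈ Finset.Ico 1 b, (if a*m < b*n then n else 0) := by
  unfold D
  apply Finset.sum_congr rfl
  intro n hn
  rw [← Finset.sum_filter, Finset.sum_const, card_filt a b hab ha hb hn]
  simp [Nat.mul_comm]

lemma hFrep (a b : ℕ) (hab : Nat.Coprime a b) (ha : 0 < a) (hb : 0 < b) :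
    F a b = ∑ m ∈ Finset.Ico 1 b, ∑ n ∈ Finset.Ico 1 a, (if b*n < a*m then 1 else 0) := by
  unfold F
  apply Finset.sum_congr rfl
  intro m hm
  rw [← Finset.sum_filter, Finset.sum_const, card_filt b a hab.symm hb ha hm]
  simp

lemma sum_Ico_id' (b : ℕ) : 2 * (∑ m ∈ Finset.Ico 1 b, m) = b * (b-1) := by
  induction b with
  | zero => simp
  | succ n ih =>
    rcases Nat.eq_zero_or_pos n with h | h
    · subst h; simp
    obtain ⟨k, rfl⟩ : ∃ k, n = k + 1 := ⟨n-1, by omega⟩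
    rw [Finset.sum_Ico_succ_top (by omega), Nat.mul_add, ih]
    have e1 : k+1-1 = k := by omega
    have e2 : k+1+1-1 = k+1 := by omega
    rw [e1, e2]
    ring

lemma hEFrep (a b : ℕ) (hab : Nat.Coprime a b) (ha : 0 < a) (hb : 0 < b) :
    E a b + F a b = ∑ m ∈ Finset.Ico 1 b, ∑ n ∈ Finset.Ico 1 a, (if b*n < a*m then 2*n else 0) := by
  unfold E F
  rw [← Finset.sum_add_distrib]
  apply Finset.sum_congr rfl
  intro m hm
  rw [← Finset.sum_filter, filt b a hab.symm hb ha hm, ← Finset.mul_sum, sum_Ico_id']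
  simp only [Nat.add_sub_cancel]
  ring

-- involution
lemma hswap (a b : ℕ) (ha : 0 < a) (hb : 0 < b) :
    ∑ n ∈ Finset.Ico 1 a, ∑ m ∈ Finset.Ico 1 b, (if a*m < b*n then 2*n else 0)
    = ∑ m ∈ Finset.Ico 1 b, ∑ n ∈ Finset.Ico 1 a, (if b*n < a*m then 2*(a-n) else 0) := by
  rw [Finset.sum_comm]
  rw [← Finset.sum_product' (s := Finset.Ico 1 b) (t := Finset.Ico 1 a)
    (f := fun m n => if a*m < b*n then 2*n else 0)]
  rw [← Finset.sum_product' (s := Finset.Ico 1 b) (t := Finset.Ico 1 a)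
    (f := fun m n => if b*n < a*m then 2*(a-n) else 0)]
  apply Finset.sum_nbij' (fun p => (b - p.1, a - p.2)) (fun p => (b - p.1, a - p.2))
  · intro p hp; simp only [Finset.mem_product, Finset.mem_Ico] at hp ⊢; omega
  · intro p hp; simp only [Finset.mem_product, Finset.mem_Ico] at hp ⊢; omega
  · intro p hp; simp only [Finset.mem_product, Finset.mem_Ico] at hp
    ext <;> simp <;> omega
  · intro p hp; simp only [Finset.mem_product, Finset.mem_Ico] at hp
    ext <;> simp <;> omega
  · intro p hp
    simp only [Finset.mem_product, Finset.mem_Ico] at hp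
    obtain ⟨⟨hm1, hm2⟩, ⟨hn1, hn2⟩⟩ := hp
    have hiff : a * p.1 < b * p.2 ↔ b * (a - p.2) < a * (b - p.1) := by
      zify [show p.2 ≤ a by omega, show p.1 ≤ b by omega]
      constructor <;> intro h <;> nlinarith
    have hval : 2 * p.2 = 2 * (a - (a - p.2)) := by omega
    simp only [hval]
    exact if_congr hiff rfl rfl

lemma lemC (a b : ℕ) (hab : Nat.Coprime a b) (ha : 0 < a) (hb : 0 < b) :
    2 * D b a + E a b + F a b = 2 * a * F a b := by
  have h1 : 2 * D b a = ∑ m ∈ Finset.Ico 1 b, ∑ n ∈ Finset.Ico 1 a,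
      (if b*n < a*m then 2*(a-n) else 0) := by
    rw [hDrep a b hab ha hb, Finset.mul_sum, ← hswap a b ha hb]
    apply Finset.sum_congr rfl; intro n _
    rw [Finset.mul_sum]
    apply Finset.sum_congr rfl; intro m _
    split <;> ring
  rw [add_assoc, h1, hEFrep a b hab ha hb, ← Finset.sum_add_distrib]
  rw [hFrep a b hab ha hb, Finset.mul_sum]
  apply Finset.sum_congr rfl; intro m _
  rw [← Finset.sum_add_distrib, Finset.mul_sum]
  apply Finset.sum_congr rfl; intro n hn
  rw [Finset.mem_Ico] at hn
  split <;> omega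



lemma cast_dm (a b m : ℕ) :
    (b:ℤ)*((a*m/b : ℕ):ℤ) + ((a*m % b : ℕ):ℤ) = (a:ℤ)*m := by
  rw [← Nat.cast_mul b, ← Nat.cast_mul a, ← Nat.cast_add]
  exact congrArg Nat.cast (Nat.div_add_mod (a*m) b)

lemma hMz (a b : ℕ) : (M a b : ℤ) = a * S2 b - b * D a b := by
  unfold M S2 D
  rw [Nat.cast_sum, Nat.cast_sum, Nat.cast_sum, Finset.mul_sum, Finset.mul_sum,
    ← Finset.sum_sub_distrib]
  apply Finset.sum_congr rfl
  intro m _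
  rw [Nat.cast_mul, Nat.cast_mul, Nat.cast_pow]
  linear_combination (m:ℤ) * cast_dm a b m

lemma sum_sq_mod (a b : ℕ) :
    (∑ m ∈ Finset.Ico 1 b, ((a*m % b : ℕ) : ℤ)^2)
      = a^2 * S2 b - 2*a*b*(D a b) + b^2*(E a b) := by
  unfold S2 D E
  rw [Nat.cast_sum, Nat.cast_sum, Nat.cast_sum, Finset.mul_sum, Finset.mul_sum, Finset.mul_sum,
    ← Finset.sum_sub_distrib, ← Finset.sum_add_distrib]
  apply Finset.sum_congr rfl
  intro m _
  simp only [Nat.cast_mul, Nat.cast_pow]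
  linear_combination (((a*m % b : ℕ) : ℤ) + ((a:ℤ)*m - b*((a*m/b : ℕ):ℤ))) * cast_dm a b m

lemma hBz (a b : ℕ) (hab : Nat.Coprime a b) :
    (a:ℤ)^2 * S2 b - 2*a*b*(D a b) + b^2*(E a b) = S2 b := by
  have h := perm_sq a b hab
  have hz : (∑ m ∈ Finset.Ico 1 b, ((a*m % b : ℕ) : ℤ)^2) = (S2 b : ℤ) := by
    simp only [← Nat.cast_pow]
    rw [← Nat.cast_sum, h]
  rw [sum_sq_mod] at hz
  exact hz

lemma key_int (a b : ℕ) (hab : Nat.Coprime a b) (ha : 0 < a) (hb : 0 < b) :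
    12*(a:ℤ)^2*(M a b) + 12*(b:ℤ)^2*(M b a)
      = a*b*(3*a^2*b + 3*a*b^2 - 9*a*b + a^2 + b^2 + 1) := by
  have h1 := hMz a b
  have h2 := hMz b a
  have h3 : (2*(D b a):ℤ) + E a b + F a b = 2*a*(F a b) := by
    exact_mod_cast congrArg (Nat.cast : ℕ → ℤ) (lemC a b hab ha hb)
  have h4 := hBz a b hab
  have h5 : (6*(S2 b):ℤ) = ((b:ℤ)-1)*b*(2*b-1) := by
    have := hS2 b
    zify [show 1 ≤ b by omega, show 1 ≤ 2*b by omega] at this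
    linarith [this]
  have h6 : (6*(S2 a):ℤ) = ((a:ℤ)-1)*a*(2*a-1) := by
    have := hS2 a
    zify [show 1 ≤ a by omega, show 1 ≤ 2*a by omega] at this
    linarith [this]
  have h7 : (2*(F a b):ℤ) = ((a:ℤ)-1)*((b:ℤ)-1) := by
    have := lemA a b hab ha hb
    zify [show 1 ≤ a by omega, show 1 ≤ b by omega] at this
    linarith [this]
  linear_combination (12*(a:ℤ)^2)*h1 + (12*(b:ℤ)^2)*h2 + (-6*(a:ℤ)*(b:ℤ)^2)*h3
    + (6*(a:ℤ))*h4 + ((a:ℤ)^3+(a:ℤ))*h5 + (2*(b:ℤ)^3)*h6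
    + (-3*(a:ℤ)*(b:ℤ)^2*(2*(a:ℤ)-1))*h7



noncomputable def w (b : ℕ) : ℂ := Complex.exp (2 * Real.pi * Complex.I / b)

lemma hprim (b : ℕ) (hb : 0 < b) : IsPrimitiveRoot (w b) b :=
  Complex.isPrimitiveRoot_exp b hb.ne'

lemma pow_one_iff (b : ℕ) (hb : 0 < b) (j : ℕ) : (w b)^j = 1 ↔ b ∣ j :=
  (hprim b hb).pow_eq_one_iff_dvd j

lemma L1 (b : ℕ) (hb : 0 < b) (j : ℕ) :
    ∑ k ∈ Finset.range b, (w b)^(j*k) = if b ∣ j then (b:ℂ) else 0 := by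
  simp only [pow_mul]
  by_cases hd : b ∣ j
  · rw [if_pos hd, (pow_one_iff b hb j).mpr hd]
    simp
  · rw [if_neg hd]
    have h1 : (w b)^j ≠ 1 := fun h => hd ((pow_one_iff b hb j).mp h)
    rw [geom_sum_eq h1]
    have h2 : ((w b)^j)^b = 1 := by
      rw [← pow_mul, mul_comm, pow_mul, (hprim b hb).pow_eq_one, one_pow]
    rw [h2]
    simp

lemma L2 (b : ℕ) (hb : 0 < b) (j : ℕ) :
    ∑ k ∈ Finset.Ico 1 b, (w b)^(j*k) = (if b ∣ j then (b:ℂ) else 0) - 1 := by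
  have h := L1 b hb j
  rw [Finset.range_eq_Ico, Finset.sum_eq_sum_Ico_succ_bot hb] at h
  simp only [Nat.mul_zero, pow_zero] at h
  norm_num at h
  linear_combination h

lemma L3 (b : ℕ) (hb : 0 < b) (x : ℂ) (hx1 : x ≠ 1) (hxb : x^b = 1) :
    (x - 1) * ∑ m ∈ Finset.range b, (m:ℂ)*x^m = b := by
  have igen : ∀ n : ℕ, (x-1) * ∑ m ∈ Finset.range n, (m:ℂ)*x^m
      = ((n:ℂ)-1)*x^n + 1 - ∑ m ∈ Finset.range n, x^m := by
    intro n
    induction n with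
    | zero => simp
    | succ n ih =>
      rw [Finset.sum_range_succ, Finset.sum_range_succ (f := fun m => x^m)]
      push_cast
      ring_nf
      ring_nf at ih
      linear_combination ih
  have hgeo : ∑ m ∈ Finset.range b, x^m = 0 := by
    rw [geom_sum_eq hx1, hxb]
    simp
  rw [igen b, hgeo, hxb]
  ring


lemma L4 (b : ℕ) (hb : 0 < b) (m : ℕ) (hm : ¬ b ∣ m) :
    ((Real.cot (Real.pi * m / b) : ℝ) : ℂ)
      = Complex.I * ((w b)^m + 1) / ((w b)^m - 1) := by
  have hb0 : (b:ℂ) ≠ 0 := Nat.cast_ne_zero.mpr hb.ne'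
  set θ : ℝ := Real.pi * m / b with hθ
  rw [Real.cot_eq_cos_div_sin, Complex.ofReal_div]
  set C : ℂ := ((Real.cos θ : ℝ) : ℂ) with hC
  set S : ℂ := ((Real.sin θ : ℝ) : ℂ) with hS
  have hx : (w b)^m = (C + S * Complex.I)^2 := by
    rw [hC, hS, Complex.ofReal_cos, Complex.ofReal_sin, ← Complex.exp_mul_I,
      ← Complex.exp_nat_mul]
    unfold w
    rw [← Complex.exp_nat_mul]
    congr 1
    rw [hθ]
    push_cast
    field_simp
  have hx1 : (w b)^m ≠ 1 := fun h => hm ((pow_one_iff b hb m).mp h)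
  have hpyth : S^2 + C^2 = 1 := by
    rw [hC, hS]
    exact_mod_cast congrArg (fun t : ℝ => (t:ℂ)) (Real.sin_sq_add_cos_sq θ)
  have hs : S ≠ 0 := by
    intro h
    apply hx1
    rw [h] at hpyth
    rw [hx, h]
    linear_combination hpyth
  have hden : (C + S*Complex.I)^2 - 1 ≠ 0 := by
    rw [← hx]; exact sub_ne_zero.mpr hx1
  rw [hx]
  field_simp
  linear_combination (C + S*Complex.I) * hpyth +
    (-(C*S^2 + S^3*Complex.I)) * Complex.I_sq


noncomputable def Sm (b j : ℕ) : ℂ := ∑ m ∈ Finset.range b, (m:ℂ) * (w b)^(j*m)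

lemma pow_pow_one (b : ℕ) (hb : 0 < b) (j : ℕ) : ((w b)^j)^b = 1 := by
  rw [← pow_mul, mul_comm, pow_mul, (hprim b hb).pow_eq_one, one_pow]

lemma hSdiv (b : ℕ) (hb : 0 < b) (j : ℕ) (hj : ¬ b ∣ j) :
    Sm b j = (b:ℂ) / ((w b)^j - 1) := by
  have h1 : (w b)^j ≠ 1 := fun h => hj ((pow_one_iff b hb j).mp h)
  rw [eq_div_iff (sub_ne_zero.mpr h1)]
  unfold Sm
  simp only [pow_mul]
  rw [mul_comm]
  exact L3 b hb _ h1 (pow_pow_one b hb j)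

lemma hT (b : ℕ) (hb : 0 < b) (c : ℕ) (hc : ∀ m ∈ Finset.Ico 1 b, ¬ b ∣ c*m) :
    ∑ k ∈ Finset.Ico 1 b, Sm b (c*k) = -∑ m ∈ Finset.range b, (m:ℂ) := by
  unfold Sm
  rw [Finset.sum_comm]
  have h1 : ∀ m ∈ Finset.range b, ∑ k ∈ Finset.Ico 1 b, (m:ℂ) * (w b)^(c*k*m)
      = (m:ℂ)*(if b ∣ c*m then (b:ℂ) else 0) - m := by
    intro m _
    rw [← Finset.mul_sum]
    have h2 : ∑ k ∈ Finset.Ico 1 b, (w b)^(c*k*m) = (if b ∣ c*m then (b:ℂ) else 0) - 1 := by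
      rw [show (∑ k ∈ Finset.Ico 1 b, (w b)^(c*k*m)) = ∑ k ∈ Finset.Ico 1 b, (w b)^((c*m)*k) from
        Finset.sum_congr rfl (fun k _ => by rw [mul_right_comm])]
      exact L2 b hb (c*m)
    rw [h2]
    ring
  rw [Finset.sum_congr rfl h1, Finset.sum_sub_distrib]
  have hz2 : ∀ m ∈ Finset.range b, (m:ℂ)*(if b ∣ c*m then (b:ℂ) else 0) = 0 := by
    intro m hm
    rcases Nat.eq_zero_or_pos m with h|h
    · subst h; simp
    · rw [if_neg (hc m (by rw [Finset.mem_Ico]; exact ⟨h, Finset.mem_range.mp hm⟩))]; ring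
  rw [Finset.sum_eq_zero hz2]
  ring

lemma diag_sum (a b : ℕ) (hab : Nat.Coprime a b) (hb : 0 < b) {m : ℕ}
    (hm : m ∈ Finset.Ico 1 b) :
    ∑ n ∈ Finset.range b, (m:ℂ)*(n:ℂ)*(if b ∣ a*m+n then (b:ℂ) else 0)
      = (m:ℂ) * ((b - a*m % b : ℕ):ℂ) * b := by
  have hnd := not_dvd a b hab hm
  rw [Finset.mem_Ico] at hm
  set r := a*m % b with hr
  have hdm : b*(a*m/b) + r = a*m := Nat.div_add_mod (a*m) b
  have hr1 : 1 ≤ r := by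
    rcases Nat.eq_zero_or_pos r with h|h
    · exact absurd (Nat.dvd_iff_mod_eq_zero.mpr h) hnd
    · exact h
  have hrb : r < b := Nat.mod_lt _ hb
  have h0 : ∀ n ∈ Finset.range b, n ≠ b - r →
      (m:ℂ)*(n:ℂ)*(if b ∣ a*m+n then (b:ℂ) else 0) = 0 := by
    intro n hn hne
    rw [Finset.mem_range] at hn
    rw [if_neg, mul_zero]
    intro hdvd
    have hd2 : b ∣ r + n := by
      have he : r + n = (a*m+n) - b*(a*m/b) := by omega
      rw [he]
      exact Nat.dvd_sub hdvd ⟨a*m/b, rfl⟩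
    obtain ⟨c, hc⟩ := hd2
    have hc1 : c = 1 := by nlinarith [hc]
    subst hc1
    omega
  have h1 : (b - r) ∉ Finset.range b →
      (m:ℂ)*((b-r : ℕ):ℂ)*(if b ∣ a*m+(b-r) then (b:ℂ) else 0) = 0 :=
    fun h => absurd (Finset.mem_range.mpr (by omega)) h
  have hdvd : b ∣ a*m + (b - r) := by
    have he : a*m + (b - r) = b*(a*m/b) + b := by omega
    exact ⟨a*m/b + 1, by rw [he]; ring⟩
  rw [Finset.sum_eq_single _ h0 h1, if_pos hdvd]

lemma hT2 (a b : ℕ) (hab : Nat.Coprime a b) (hb : 0 < b) :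
    ∑ k ∈ Finset.Ico 1 b, Sm b (a*k) * Sm b k
      = (b:ℂ) * ((b:ℂ) * (∑ m ∈ Finset.range b, (m:ℂ)) - (M a b))
        - (∑ m ∈ Finset.range b, (m:ℂ))^2 := by
  have hprod : ∀ k, Sm b (a*k) * Sm b k
      = ∑ m ∈ Finset.range b, ∑ n ∈ Finset.range b, (m:ℂ)*(n:ℂ)*(w b)^((a*m+n)*k) := by
    intro k
    unfold Sm
    rw [Finset.sum_mul_sum]
    apply Finset.sum_congr rfl; intro m _
    apply Finset.sum_congr rfl; intro n _
    have hw : (w b)^(a*k*m) * (w b)^(k*n) = (w b)^((a*m+n)*k) := by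
      rw [← pow_add]; congr 1; ring
    rw [mul_mul_mul_comm, hw]
  rw [Finset.sum_congr rfl (fun k _ => hprod k), Finset.sum_comm]
  have hswap2 : ∀ m ∈ Finset.range b,
      ∑ k ∈ Finset.Ico 1 b, ∑ n ∈ Finset.range b, (m:ℂ)*(n:ℂ)*(w b)^((a*m+n)*k)
      = ∑ n ∈ Finset.range b, ((m:ℂ)*(n:ℂ)*(if b ∣ a*m+n then (b:ℂ) else 0) - (m:ℂ)*(n:ℂ)) := by
    intro m _
    rw [Finset.sum_comm]
    apply Finset.sum_congr rfl; intro n _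
    rw [← Finset.mul_sum, L2 b hb (a*m+n)]
    ring
  rw [Finset.sum_congr rfl hswap2]
  have hsplit : ∀ m ∈ Finset.range b,
      ∑ n ∈ Finset.range b, ((m:ℂ)*(n:ℂ)*(if b ∣ a*m+n then (b:ℂ) else 0) - (m:ℂ)*(n:ℂ))
      = (∑ n ∈ Finset.range b, (m:ℂ)*(n:ℂ)*(if b ∣ a*m+n then (b:ℂ) else 0))
        - (m:ℂ) * ∑ n ∈ Finset.range b, (n:ℂ) := by
    intro m _
    rw [Finset.sum_sub_distrib, Finset.mul_sum]
  rw [Finset.sum_congr rfl hsplit, Finset.sum_sub_distrib, ← Finset.sum_mul]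
  have hdiag : ∀ m ∈ Finset.range b,
      ∑ n ∈ Finset.range b, (m:ℂ)*(n:ℂ)*(if b ∣ a*m+n then (b:ℂ) else 0)
      = (m:ℂ) * ((b - a*m % b : ℕ):ℂ) * b := by
    intro m hm
    rcases Nat.eq_zero_or_pos m with h|h
    · subst h
      simp
    · exact diag_sum a b hab hb (by rw [Finset.mem_Ico]; exact ⟨h, Finset.mem_range.mp hm⟩)
  rw [Finset.sum_congr rfl hdiag]
  have hfin : ∑ m ∈ Finset.range b, (m:ℂ) * ((b - a*m % b : ℕ):ℂ) * b
      = (b:ℂ) * ((b:ℂ) * (∑ m ∈ Finset.range b, (m:ℂ)) - (M a b)) := by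
    rw [Finset.range_eq_Ico, Finset.sum_eq_sum_Ico_succ_bot hb,
      Finset.sum_eq_sum_Ico_succ_bot (f := fun m => (m:ℂ)) hb]
    simp only [Nat.cast_zero, zero_mul, zero_add]
    have hpt : ∀ m ∈ Finset.Ico 1 b, (m:ℂ) * ((b - a*m % b : ℕ):ℂ) * b
        = (b:ℂ)*((b:ℂ)*(m:ℂ)) - (b:ℂ)*((m:ℂ)*((a*m % b : ℕ):ℂ)) := by
      intro m hm
      rw [Nat.cast_sub (le_of_lt (Nat.mod_lt _ hb))]
      ring
    rw [Finset.sum_congr rfl hpt, Finset.sum_sub_distrib, ← Finset.mul_sum, ← Finset.mul_sum,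
      ← Finset.mul_sum]
    have hM : (∑ m ∈ Finset.Ico 1 b, (m:ℂ)*((a*m % b : ℕ):ℂ)) = ((M a b : ℕ):ℂ) := by
      unfold M
      rw [Nat.cast_sum]
      exact Finset.sum_congr rfl (fun m _ => by rw [Nat.cast_mul])
    rw [hM]
    ring
  rw [hfin]
  ring


lemma hsigma (b : ℕ) (hb : 0 < b) :
    2 * (∑ m ∈ Finset.range b, (m:ℂ)) = (b:ℂ)*((b:ℂ)-1) := by
  have h : 2 * (∑ m ∈ Finset.range b, m) = b*(b-1) := by
    rw [Finset.range_eq_Ico, Finset.sum_eq_sum_Ico_succ_bot hb]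
    simpa using sum_Ico_id b
  calc (2:ℂ) * ∑ m ∈ Finset.range b, (m:ℂ)
      = ((2 * ∑ m ∈ Finset.range b, m : ℕ) : ℂ) := by push_cast; ring
    _ = ((b*(b-1) : ℕ):ℂ) := by rw [h]
    _ = (b:ℂ)*((b:ℂ)-1) := by
        push_cast [Nat.cast_sub (show 1 ≤ b by omega)]
        ring

lemma prod_step (b : ℕ) (hb : 0 < b) (x y : ℂ) (hx : x ≠ 1) (hy : y ≠ 1) :
    (Complex.I*(x+1)/(x-1)) * (Complex.I*(y+1)/(y-1))
      = -(1 + (2/(b:ℂ))*((b:ℂ)/(x-1))) * (1 + (2/(b:ℂ))*((b:ℂ)/(y-1))) := by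
  have hb0 : (b:ℂ) ≠ 0 := Nat.cast_ne_zero.mpr hb.ne'
  have hx0 : x - 1 ≠ 0 := sub_ne_zero.mpr hx
  have hy0 : y - 1 ≠ 0 := sub_ne_zero.mpr hy
  field_simp
  linear_combination ((x+1)*(y+1)) * Complex.I_sq

lemma cot_sum_complex (a b : ℕ) (ha : 0 < a) (hb : 0 < b) (hab : Nat.Coprime a b) :
    ∑ k ∈ Finset.Ico 1 b,
        ((Real.cot (Real.pi * k * a / b) : ℝ):ℂ) * ((Real.cot (Real.pi * k / b) : ℝ):ℂ)
      = 4*((M a b : ℕ):ℂ)/b + b - (b:ℂ)^2 := by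
  have hb0 : (b:ℂ) ≠ 0 := Nat.cast_ne_zero.mpr hb.ne'
  have hstep : ∀ k ∈ Finset.Ico 1 b,
      ((Real.cot (Real.pi * k * a / b) : ℝ):ℂ) * ((Real.cot (Real.pi * k / b) : ℝ):ℂ)
        = -(1 + (2/(b:ℂ))*Sm b (a*k)) * (1 + (2/(b:ℂ))*Sm b k) := by
    intro k hk
    have hk' := hk
    rw [Finset.mem_Ico] at hk'
    have hk1 : ¬ b ∣ k := fun h => by have := Nat.le_of_dvd (by omega) h; omega
    have hk2 : ¬ b ∣ a*k := not_dvd a b hab hk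
    have harg : Real.pi * (k:ℝ) * a / b = Real.pi * ((a*k : ℕ):ℝ) / b := by push_cast; ring
    rw [harg, L4 b hb (a*k) hk2, L4 b hb k hk1, hSdiv b hb (a*k) hk2, hSdiv b hb k hk1]
    exact prod_step b hb _ _ (fun h => hk2 ((pow_one_iff b hb _).mp h))
      (fun h => hk1 ((pow_one_iff b hb _).mp h))
  rw [Finset.sum_congr rfl hstep]
  have hexp : ∀ k ∈ Finset.Ico 1 b, -(1 + (2/(b:ℂ))*Sm b (a*k)) * (1 + (2/(b:ℂ))*Sm b k)
      = -1 - (2/(b:ℂ))*Sm b (a*k) - (2/(b:ℂ))*Sm b k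
          - (4/(b:ℂ)^2)*(Sm b (a*k)*Sm b k) := by
    intro k _; ring
  rw [Finset.sum_congr rfl hexp]
  rw [Finset.sum_sub_distrib, Finset.sum_sub_distrib, Finset.sum_sub_distrib]
  rw [← Finset.mul_sum, ← Finset.mul_sum, ← Finset.mul_sum]
  rw [Finset.sum_const, Nat.card_Ico]
  rw [hT b hb a (fun m hm => not_dvd a b hab hm)]
  have hT1' : ∑ k ∈ Finset.Ico 1 b, Sm b k = -∑ m ∈ Finset.range b, (m:ℂ) := by
    have h := hT b hb 1 (fun m hm => by
      rw [Finset.mem_Ico] at hm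
      rw [one_mul]
      intro hd
      have := Nat.le_of_dvd (by omega) hd
      omega)
    simpa [one_mul] using h
  rw [hT1', hT2 a b hab hb]
  set σ := ∑ m ∈ Finset.range b, (m:ℂ) with hσdef
  have hσv : σ = (b:ℂ)*((b:ℂ)-1)/2 := by linear_combination (hsigma b hb)/2
  rw [hσv]
  have hbm1 : ((b - 1 : ℕ):ℂ) = (b:ℂ) - 1 := by
    push_cast [Nat.cast_sub (show 1 ≤ b by omega)]
    ring
  simp only [nsmul_eq_mul, hbm1]
  field_simp
  ring

lemma cot_sum_real (a b : ℕ) (ha : 0 < a) (hb : 0 < b) (hab : Nat.Coprime a b) :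
    ∑ k ∈ Finset.Icc 1 (b-1), Real.cot (Real.pi * k * a / b) * Real.cot (Real.pi * k / b)
      = 4*((M a b : ℕ):ℝ)/b + b - (b:ℝ)^2 := by
  have hIcc : Finset.Icc 1 (b-1) = Finset.Ico 1 b := by
    ext x
    simp only [Finset.mem_Icc, Finset.mem_Ico]
    omega
  rw [hIcc]
  apply Complex.ofReal_injective
  push_cast
  exact_mod_cast cot_sum_complex a b ha hb hab

end DedekindAux

noncomputable def dedekindSum (a b : ℕ) : ℝ :=
  (1 / (4 * (b : ℝ))) * ∑ k ∈ Finset.Icc 1 (b - 1),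
    Real.cot (π * k * a / b) * Real.cot (π * k / b)

theorem dedekind_integrality (a b : ℕ) (ha : 0 < a) (hb : 0 < b)
    (hab : Nat.Coprime a b) :
    12 * (a : ℝ) * b * (dedekindSum a b + dedekindSum b a) =
      -3 * (a : ℝ) * b + (a : ℝ) ^ 2 + 1 + (b : ℝ) ^ 2 ∧
    ∃ n : ℤ, 12 * (a : ℝ) * b * dedekindSum a b + 12 * (a : ℝ) * b * dedekindSum b a = n := by
  have hb0 : (b:ℝ) ≠ 0 := Nat.cast_ne_zero.mpr hb.ne'
  have ha0 : (a:ℝ) ≠ 0 := Nat.cast_ne_zero.mpr ha.ne'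
  have hsab : dedekindSum a b = ((DedekindAux.M a b : ℕ) : ℝ)/(b:ℝ)^2 + (1-(b:ℝ))/4 := by
    unfold dedekindSum
    rw [DedekindAux.cot_sum_real a b ha hb hab]
    field_simp
    ring
  have hsba : dedekindSum b a = ((DedekindAux.M b a : ℕ) : ℝ)/(a:ℝ)^2 + (1-(a:ℝ))/4 := by
    unfold dedekindSum
    rw [DedekindAux.cot_sum_real b a hb ha hab.symm]
    field_simp
    ring
  have key : 12*(a:ℝ)^2*((DedekindAux.M a b : ℕ):ℝ) + 12*(b:ℝ)^2*((DedekindAux.M b a : ℕ):ℝ)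
      = (a:ℝ)*b*(3*(a:ℝ)^2*b + 3*(a:ℝ)*(b:ℝ)^2 - 9*(a:ℝ)*b + (a:ℝ)^2 + (b:ℝ)^2 + 1) := by
    exact_mod_cast DedekindAux.key_int a b hab ha hb
  have main : 12 * (a : ℝ) * b * (dedekindSum a b + dedekindSum b a) =
      -3 * (a : ℝ) * b + (a : ℝ) ^ 2 + 1 + (b : ℝ) ^ 2 := by
    rw [hsab, hsba]
    field_simp
    linear_combination 4*key
  refine ⟨main, ⟨-3*(a:ℤ)*b + (a:ℤ)^2 + 1 + (b:ℤ)^2, ?_⟩⟩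
  push_cast
  linear_combination main
end
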